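/- The reformulated problem max { πᵀ(F z* − d) + aᵀκ : A x ≤ a, Eᵀπ = 0, 0 ≤ π ≤ 1, Dᵀπ = Aᵀκ, κᵀ(a − A x) = 0, κ ≥ 0 } has the same optimal value as the bilinear problem max { πᵀ(F z* − d) + πᵀ D x : A x ≤ a, Eᵀπ = 0, 0 ≤ π ≤ 1 }, provided the latter has a finite optimum and for each feasible π the inner maximization over x attains its optimum. -/

import Mathlib

open Matrix BigOperators

/-!
Under the stationarity condition `Dᵀπ = Aᵀκ` and complementary slackness `κᵀ(a - Ax) = 0` one has
`aᵀκ = κᵀAx = πᵀDx`, so every value of the reformulated problem is a value of the bilinear one.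
Conversely, take an optimal `(x₀, π)` of the bilinear problem and a maximiser `x` of the inner
linear program `max {πᵀDx : Ax ≤ a}`; `(x, π)` is still optimal, and LP duality (Farkas' lemma,
in its Fourier–Motzkin form) supplies a multiplier `κ ≥ 0` with `Aᵀκ = Dᵀπ` and
complementary slackness. Hence the bilinear optimum is also a value of the reformulation, and
both suprema equal it.
-/

section UpdateInsert

variable {ι α M : Type*} [DecidableEq ι] {S : Finset ι} {j : ι}

lemma nonneg_update_of_mem_insert [Zero α] [LE α] {κ : ι → α} {μ : α}
    (hκ : ∀ i ∈ S, 0 ≤ κ i) (hμ : 0 ≤ μ) : ∀ i ∈ insert j S, 0 ≤ Function.update κ j μ i := by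
  intro i hi
  by_cases hij : i = j
  · subst hij; simpa using hμ
  · rw [Function.update_of_ne hij]
    exact hκ i ((Finset.mem_insert.mp hi).resolve_left hij)

lemma sum_insert_update_smul [AddCommMonoid M] [SMul α M] (hj : j ∉ S) (κ : ι → α) (μ : α)
    (v : ι → M) :
    ∑ i ∈ insert j S, Function.update κ j μ i • v i = μ • v j + ∑ i ∈ S, κ i • v i := by
  rw [Finset.sum_insert hj, Function.update_self]
  congr 1
  exact Finset.sum_congr rfl fun i hi => by rw [Function.update_of_ne (ne_of_mem_of_not_mem hi hj)]

end UpdateInsert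

section Farkas

variable {𝕜 ι ν : Type*} [Field 𝕜] [LinearOrder 𝕜] [IsStrictOrderedRing 𝕜] [Fintype ν]

omit [LinearOrder 𝕜] [IsStrictOrderedRing 𝕜] in
lemma dotProduct_sub_smul_eq_sub_smul_dotProduct (w u y y' : ν → 𝕜) (t : 𝕜) :
    w ⬝ᵥ (y' - (u ⬝ᵥ y' / t) • y) = (w - (w ⬝ᵥ y / t) • u) ⬝ᵥ y' := by
  simp only [dotProduct_sub, sub_dotProduct, dotProduct_smul, smul_dotProduct, smul_eq_mul]
  ring

variable [DecidableEq ι] {S : Finset ι} {j : ι} {v : ι → ν → 𝕜} {c y : ν → 𝕜}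

lemma exists_nonneg_sum_insert_smul_eq (hj : j ∉ S) (hjy : 0 < v j ⬝ᵥ y)
    (hSy : ∀ i ∈ S, v i ⬝ᵥ y ≤ 0) (hcy : 0 < c ⬝ᵥ y) {κ : ι → 𝕜} (hκ : ∀ i ∈ S, 0 ≤ κ i)
    (hsum : ∑ i ∈ S, κ i • (v i - (v i ⬝ᵥ y / v j ⬝ᵥ y) • v j)
      = c - (c ⬝ᵥ y / v j ⬝ᵥ y) • v j) :
    ∃ κ' : ι → 𝕜, (∀ i ∈ insert j S, 0 ≤ κ' i) ∧ ∑ i ∈ insert j S, κ' i • v i = c := by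
  set t := v j ⬝ᵥ y
  have hμ : 0 ≤ c ⬝ᵥ y / t - ∑ i ∈ S, κ i * (v i ⬝ᵥ y / t) := by
    have : ∑ i ∈ S, κ i * (v i ⬝ᵥ y / t) ≤ 0 := Finset.sum_nonpos fun i hi =>
      mul_nonpos_of_nonneg_of_nonpos (hκ i hi) (div_nonpos_of_nonpos_of_nonneg (hSy i hi) hjy.le)
    have : 0 < c ⬝ᵥ y / t := div_pos hcy hjy
    linarith
  refine ⟨Function.update κ j _, nonneg_update_of_mem_insert hκ hμ, ?_⟩
  rw [sum_insert_update_smul hj]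
  simp only [smul_sub, smul_smul, Finset.sum_sub_distrib, ← Finset.sum_smul] at hsum
  linear_combination (norm := module) hsum

omit [IsStrictOrderedRing 𝕜] in
lemma exists_dotProduct_pos_insert (hjy : v j ⬝ᵥ y ≠ 0) {y' : ν → 𝕜}
    (hSy' : ∀ i ∈ S, (v i - (v i ⬝ᵥ y / v j ⬝ᵥ y) • v j) ⬝ᵥ y' ≤ 0)
    (hcy' : 0 < (c - (c ⬝ᵥ y / v j ⬝ᵥ y) • v j) ⬝ᵥ y') :
    ∃ y'' : ν → 𝕜, (∀ i ∈ insert j S, v i ⬝ᵥ y'' ≤ 0) ∧ 0 < c ⬝ᵥ y'' := by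
  refine ⟨y' - (v j ⬝ᵥ y' / v j ⬝ᵥ y) • y, ?_, by rwa [dotProduct_sub_smul_eq_sub_smul_dotProduct]⟩
  intro i hi
  rw [dotProduct_sub_smul_eq_sub_smul_dotProduct]
  rcases Finset.mem_insert.mp hi with rfl | hi
  · simp [div_self hjy]
  · exact hSy' i hi

/-- Farkas' lemma. In the induction step, when `y` separates `c` from `v '' S` but not from `v j`,
the vectors are projected along `v j` onto the hyperplane `y ⬝ᵥ · = 0`, and the answer for the
projected instance lifts back. -/
theorem exists_nonneg_sum_smul_eq_or_exists_dotProduct_pos (S : Finset ι) (v : ι → ν → 𝕜)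
    (c : ν → 𝕜) :
    (∃ κ : ι → 𝕜, (∀ i ∈ S, 0 ≤ κ i) ∧ ∑ i ∈ S, κ i • v i = c) ∨
      ∃ y : ν → 𝕜, (∀ i ∈ S, v i ⬝ᵥ y ≤ 0) ∧ 0 < c ⬝ᵥ y := by
  induction S using Finset.induction_on generalizing v c with
  | empty =>
    by_cases hc : c = 0
    · exact .inl ⟨0, by simp, by simp [hc]⟩
    · exact .inr ⟨c, by simp, (Finset.sum_nonneg fun i _ => mul_self_nonneg (c i)).lt_of_ne'
        (mt dotProduct_self_eq_zero.mp hc)⟩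
  | insert j S hj ih =>
    rcases ih v c with ⟨κ, hκ, hsum⟩ | ⟨y, hSy, hcy⟩
    · exact .inl ⟨Function.update κ j 0, nonneg_update_of_mem_insert hκ le_rfl,
        by rw [sum_insert_update_smul hj, zero_smul, zero_add, hsum]⟩
    by_cases hjy : v j ⬝ᵥ y ≤ 0
    · exact .inr ⟨y, by simpa [hjy] using hSy, hcy⟩
    push Not at hjy
    rcases ih (fun i => v i - (v i ⬝ᵥ y / v j ⬝ᵥ y) • v j) (c - (c ⬝ᵥ y / v j ⬝ᵥ y) • v j) with
      ⟨κ, hκ, hsum⟩ | ⟨y', hSy', hcy'⟩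
    · exact .inl (exists_nonneg_sum_insert_smul_eq hj hjy hSy hcy hκ hsum)
    · exact .inr (exists_dotProduct_pos_insert hjy.ne' hSy' hcy')

end Farkas

section KKT

variable {m n : Type*} [Fintype m] [Fintype n] {A : Matrix m n ℝ} {a : m → ℝ} {x y : n → ℝ}

open Filter Topology in
lemma exists_pos_mulVec_add_smul_le (hx : A *ᵥ x ≤ a)
    (hy : ∀ i, (A *ᵥ x) i = a i → (A *ᵥ y) i ≤ 0) : ∃ ε : ℝ, 0 < ε ∧ A *ᵥ (x + ε • y) ≤ a := by
  have hrow : ∀ i, ∀ᶠ ε in 𝓝[>] (0 : ℝ), (A *ᵥ x) i + ε * (A *ᵥ y) i ≤ a i := by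
    intro i
    by_cases hAy : (A *ᵥ y) i ≤ 0
    · filter_upwards [self_mem_nhdsWithin] with ε hε
      linarith [hx i, mul_nonpos_of_nonneg_of_nonpos (Set.mem_Ioi.mp hε).le hAy]
    · have hlt : (A *ᵥ x) i < a i := (hx i).lt_of_ne fun h => hAy (hy i h)
      have hcont : Tendsto (fun ε : ℝ => (A *ᵥ x) i + ε * (A *ᵥ y) i) (𝓝 0) (𝓝 ((A *ᵥ x) i)) := by
        have : Continuous fun ε : ℝ => (A *ᵥ x) i + ε * (A *ᵥ y) i := by fun_prop
        simpa using this.tendsto 0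
      exact nhdsWithin_le_nhds (hcont.eventually (eventually_le_nhds hlt))
  obtain ⟨ε, hfeas, hε⟩ := ((eventually_all.mpr hrow).and self_mem_nhdsWithin).exists
  refine ⟨ε, hε, fun i => ?_⟩
  simpa [mulVec_add, mulVec_smul] using hfeas i

theorem exists_kkt_multiplier_of_isMaxOn {c : n → ℝ} (hx : A *ᵥ x ≤ a)
    (hmax : IsMaxOn (c ⬝ᵥ ·) {x' | A *ᵥ x' ≤ a} x) :
    ∃ κ : m → ℝ, 0 ≤ κ ∧ Aᵀ *ᵥ κ = c ∧ κ ⬝ᵥ (a - A *ᵥ x) = 0 := by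
  classical
  set active := Finset.univ.filter fun i => (A *ᵥ x) i = a i
  rcases exists_nonneg_sum_smul_eq_or_exists_dotProduct_pos active (fun i => A i) c with
    ⟨κ, hκ, hsum⟩ | ⟨y, hy, hcy⟩
  · refine ⟨fun i => if i ∈ active then κ i else 0, fun i => ?_, ?_, ?_⟩
    · by_cases hi : i ∈ active <;> simp [hi, hκ]
    · rw [mulVec_transpose, vecMul_eq_sum, ← hsum]
      simp [ite_smul]
    · refine Finset.sum_eq_zero fun i _ => ?_
      by_cases hi : i ∈ active
      · simp [(Finset.mem_filter.mp hi).2]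
      · simp [hi]
  · obtain ⟨ε, hε, hfeas⟩ := exists_pos_mulVec_add_smul_le hx fun i hi =>
      hy i (Finset.mem_filter.mpr ⟨Finset.mem_univ i, hi⟩)
    have : c ⬝ᵥ (x + ε • y) ≤ c ⬝ᵥ x := hmax hfeas
    rw [dotProduct_add, dotProduct_smul, smul_eq_mul] at this
    linarith [mul_pos hε hcy]

end KKT

lemma dotProduct_mulVec_eq_of_kkt {m n p : Type*} [Fintype m] [Fintype n] [Fintype p]
    {A : Matrix m n ℝ} {D : Matrix p n ℝ} {a : m → ℝ} {x : n → ℝ} {π : p → ℝ} {κ : m → ℝ}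
    (hDA : Dᵀ *ᵥ π = Aᵀ *ᵥ κ) (hslack : κ ⬝ᵥ (a - A *ᵥ x) = 0) :
    π ⬝ᵥ D *ᵥ x = a ⬝ᵥ κ := by
  rw [dotProduct_sub, sub_eq_zero] at hslack
  rw [dotProduct_mulVec, ← mulVec_transpose, hDA, mulVec_transpose, ← dotProduct_mulVec,
    ← hslack, dotProduct_comm]

lemma csSup_eq_csSup_of_subset_of_isGreatest {α : Type*} [ConditionallyCompleteLattice α]
    {s t : Set α} {v : α} (hst : s ⊆ t) (ht : IsGreatest t v) (hv : v ∈ s) :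
    sSup s = sSup t :=
  (IsGreatest.csSup_eq ⟨hv, fun _ hw => ht.2 (hst hw)⟩).trans ht.csSup_eq.symm

theorem SP2_reformulation_same_value_general {m n p q r : ℕ}
    (A : Matrix (Fin m) (Fin n) ℝ) (D : Matrix (Fin p) (Fin n) ℝ)
    (E : Matrix (Fin p) (Fin q) ℝ) (F : Matrix (Fin p) (Fin r) ℝ)
    (a : Fin m → ℝ) (d : Fin p → ℝ) (z : Fin r → ℝ)
    (hattain : ∀ π : Fin p → ℝ, E.transpose.mulVec π = 0 → 0 ≤ π → π ≤ 1 →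
      ∃ x : Fin n → ℝ, A.mulVec x ≤ a ∧
        IsGreatest {w : ℝ | ∃ x' : Fin n → ℝ, A.mulVec x' ≤ a ∧ w = π ⬝ᵥ D.mulVec x'}
          (π ⬝ᵥ D.mulVec x))
    (hfin : ∃ v : ℝ, IsGreatest {v : ℝ | ∃ (x : Fin n → ℝ) (π : Fin p → ℝ),
        A.mulVec x ≤ a ∧ E.transpose.mulVec π = 0 ∧ 0 ≤ π ∧ π ≤ 1 ∧
        v = π ⬝ᵥ (F.mulVec z - d) + π ⬝ᵥ D.mulVec x} v) :
    sSup {v : ℝ | ∃ (x : Fin n → ℝ) (π : Fin p → ℝ) (κ : Fin m → ℝ),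
        A.mulVec x ≤ a ∧ E.transpose.mulVec π = 0 ∧ 0 ≤ π ∧ π ≤ 1 ∧
        D.transpose.mulVec π = A.transpose.mulVec κ ∧
        κ ⬝ᵥ (a - A.mulVec x) = 0 ∧ 0 ≤ κ ∧
        v = π ⬝ᵥ (F.mulVec z - d) + a ⬝ᵥ κ}
      = sSup {v : ℝ | ∃ (x : Fin n → ℝ) (π : Fin p → ℝ),
        A.mulVec x ≤ a ∧ E.transpose.mulVec π = 0 ∧ 0 ≤ π ∧ π ≤ 1 ∧
        v = π ⬝ᵥ (F.mulVec z - d) + π ⬝ᵥ D.mulVec x} := by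
  obtain ⟨v, hv⟩ := hfin
  refine csSup_eq_csSup_of_subset_of_isGreatest ?_ hv ?_
  · rintro w ⟨x, π, κ, hx, hE, hπ₀, hπ₁, hDA, hslack, -, rfl⟩
    exact ⟨x, π, hx, hE, hπ₀, hπ₁, by rw [dotProduct_mulVec_eq_of_kkt hDA hslack]⟩
  · obtain ⟨x₀, π, hx₀, hE, hπ₀, hπ₁, rfl⟩ := hv.1
    obtain ⟨x, hx, hxmax⟩ := hattain π hE hπ₀ hπ₁
    have hmax : IsMaxOn (Dᵀ *ᵥ π ⬝ᵥ ·) {x' | A *ᵥ x' ≤ a} x := isMaxOn_iff.mpr fun x' hx' => by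
      simpa only [mulVec_transpose, ← dotProduct_mulVec] using hxmax.2 ⟨x', hx', rfl⟩
    obtain ⟨κ, hκ, hAκ, hslack⟩ := exists_kkt_multiplier_of_isMaxOn hx hmax
    have hval : π ⬝ᵥ D *ᵥ x = π ⬝ᵥ D *ᵥ x₀ :=
      le_antisymm (le_of_add_le_add_left (hv.2 ⟨x, π, hx, hE, hπ₀, hπ₁, rfl⟩))
        (hxmax.2 ⟨x₀, hx₀, rfl⟩)
    refine ⟨x, π, κ, hx, hE, hπ₀, hπ₁, hAκ.symm, hslack, hκ, ?_⟩
    rw [← dotProduct_mulVec_eq_of_kkt hAκ.symm hslack, hval]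

/-- The KKT-based reformulation (16) of SP2 has the same optimal value as the bilinear
problem max {πᵀ(Fz* − d) + πᵀDx : Ax ≤ a, Eᵀπ = 0, 0 ≤ π ≤ 1}, provided the latter has
a finite optimum and the inner maximization over x attains its optimum for each feasible π. -/
theorem SP2_reformulation_same_value {m n p q r : ℕ}
    (A : Matrix (Fin m) (Fin n) ℝ) (D : Matrix (Fin p) (Fin n) ℝ)
    (E : Matrix (Fin p) (Fin q) ℝ) (F : Matrix (Fin p) (Fin r) ℝ)
    (a : Fin m → ℝ) (d : Fin p → ℝ) (z : Fin r → ℝ) (hz : ∀ i, z i = 0 ∨ z i = 1)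
    (hne : ∃ x : Fin n → ℝ, A.mulVec x ≤ a)
    (hattain : ∀ π : Fin p → ℝ, E.transpose.mulVec π = 0 → 0 ≤ π → π ≤ 1 →
      ∃ x : Fin n → ℝ, A.mulVec x ≤ a ∧
        IsGreatest {w : ℝ | ∃ x' : Fin n → ℝ, A.mulVec x' ≤ a ∧ w = π ⬝ᵥ D.mulVec x'}
          (π ⬝ᵥ D.mulVec x))
    (hfin : ∃ v : ℝ, IsGreatest {v : ℝ | ∃ (x : Fin n → ℝ) (π : Fin p → ℝ),
        A.mulVec x ≤ a ∧ E.transpose.mulVec π = 0 ∧ 0 ≤ π ∧ π ≤ 1 ∧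
        v = π ⬝ᵥ (F.mulVec z - d) + π ⬝ᵥ D.mulVec x} v) :
    sSup {v : ℝ | ∃ (x : Fin n → ℝ) (π : Fin p → ℝ) (κ : Fin m → ℝ),
        A.mulVec x ≤ a ∧ E.transpose.mulVec π = 0 ∧ 0 ≤ π ∧ π ≤ 1 ∧
        D.transpose.mulVec π = A.transpose.mulVec κ ∧
        κ ⬝ᵥ (a - A.mulVec x) = 0 ∧ 0 ≤ κ ∧
        v = π ⬝ᵥ (F.mulVec z - d) + a ⬝ᵥ κ}
      = sSup {v : ℝ | ∃ (x : Fin n → ℝ) (π : Fin p → ℝ),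
        A.mulVec x ≤ a ∧ E.transpose.mulVec π = 0 ∧ 0 ≤ π ∧ π ≤ 1 ∧
        v = π ⬝ᵥ (F.mulVec z - d) + π ⬝ᵥ D.mulVec x} :=
  SP2_reformulation_same_value_general A D E F a d z hattain hfin
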